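/- arXiv:2310.11172 — 2 statements merged into one kernel-verified Lean document; each statement's English description precedes it below -/
import Mathlib

section
/- Let (A, B, C) be a recollement of abelian categories in which A, B, C have enough projectives and enough injectives, let X be a class of objects of B closed under isomorphisms and X'' a class of objects of C closed under isomorphisms. Then X''^⊥-cores C ≤ X^⊥-cores B + X''^⊥-cores j^*(X^⊥), where X''^⊥-cores C and X^⊥-cores B denote the suprema over all objects of C and of B respectively, and j^*(X^⊥) denotes the class of objects of C isomorphic to j^*(B') for some B' in X^⊥. -/
/-!
Let `n = X^⊥-cores ℬ` and `m = X''^⊥-cores j^*(X^⊥)`. For `C` in `𝒞`, the exact functor `j^*`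
carries an `X^⊥`-coresolution of `j_* C` of length at most `n` to a coresolution of
`j^* j_* C ≅ C` whose terms lie in `j^*(X^⊥)`, where `Ext^{>m}(X'', -)` vanishes. Dimension
shifting gives `Ext^{>n+m}(X'', C) = 0`, and since injectives lie in `X''^⊥` and `𝒞` has enough of
them, this vanishing yields an `X''^⊥`-coresolution of `C` of length `n + m`.
-/

open CategoryTheory CategoryTheory.Limits

universe w₁ w₂ w₃ v₁ v₂ v₃ u₁ u₂ u₃

namespace Paper

/-- A recollement of abelian categories `(𝒜, ℬ, 𝒞)`. -/
structure Recollement (𝒜 : Type u₁) (ℬ : Type u₂) (𝒞 : Type u₃)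
    [Category.{v₁} 𝒜] [Category.{v₂} ℬ] [Category.{v₃} 𝒞]
    [Preadditive 𝒜] [Preadditive ℬ] [Preadditive 𝒞] where
  /-- `i^* : ℬ → 𝒜` -/
  iStar : ℬ ⥤ 𝒜
  /-- `i_* : 𝒜 → ℬ` -/
  iIns : 𝒜 ⥤ ℬ
  /-- `i^! : ℬ → 𝒜` -/
  iShriek : ℬ ⥤ 𝒜
  /-- `j_! : 𝒞 → ℬ` -/
  jShriek : 𝒞 ⥤ ℬ
  /-- `j^* : ℬ → 𝒞` -/
  jStar : ℬ ⥤ 𝒞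
  /-- `j_* : 𝒞 → ℬ` -/
  jIns : 𝒞 ⥤ ℬ
  iStar_additive : iStar.Additive
  iIns_additive : iIns.Additive
  iShriek_additive : iShriek.Additive
  jShriek_additive : jShriek.Additive
  jStar_additive : jStar.Additive
  jIns_additive : jIns.Additive
  /-- `i^* ⊣ i_*` -/
  adj₁ : iStar ⊣ iIns
  /-- `i_* ⊣ i^!` -/
  adj₂ : iIns ⊣ iShriek
  /-- `j_! ⊣ j^*` -/
  adj₃ : jShriek ⊣ jStar
  /-- `j^* ⊣ j_*` -/
  adj₄ : jStar ⊣ jIns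
  iIns_full : iIns.Full
  iIns_faithful : iIns.Faithful
  jShriek_full : jShriek.Full
  jShriek_faithful : jShriek.Faithful
  jIns_full : jIns.Full
  jIns_faithful : jIns.Faithful
  /-- an object `B` of `ℬ` satisfies `j^*(B) = 0` iff `B ≅ i_*(A)` for some `A` -/
  ker_jStar : ∀ B : ℬ, IsZero (jStar.obj B) ↔ ∃ A : 𝒜, Nonempty (iIns.obj A ≅ B)

variable {D : Type u₁} [Category.{v₁} D] [Abelian D]

/-- The right perpendicular class `X^⊥` of a class of objects:
objects `M` with `Ext^i(A, M) = 0` for all `A` in the class and all `i ≥ 1`. -/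
def perp [HasExt.{w₁} D] (X : D → Prop) : D → Prop :=
  fun M => ∀ A, X A → ∀ i : ℕ, 1 ≤ i → Subsingleton (Abelian.Ext A M i)

/-- `CoresSeq W n M Z` : there is an exact sequence
`0 → M → W₀ → ⋯ → W_{n-1} → Z → 0` with each `Wᵢ` in `W`. -/
def CoresSeq (W : D → Prop) : ℕ → D → D → Prop
  | 0, M, Z => Nonempty (M ≅ Z)
  | n + 1, M, Z => ∃ (W₀ K : D) (f : M ⟶ W₀) (g : W₀ ⟶ K) (h : f ≫ g = 0),
      W W₀ ∧ (ShortComplex.mk f g h).ShortExact ∧ CoresSeq W n K Z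

/-- The `W`-coresolution dimension of an object, valued in `ℕ∞`:
the least `n` such that there is an exact sequence `0 → M → W₀ → ⋯ → Wₙ → 0`
with all `Wᵢ` in `W` (and `∞` if there is no such sequence). -/
noncomputable def coresDim (W : D → Prop) (M : D) : ℕ∞ :=
  sInf {n : ℕ∞ | ∃ m : ℕ, n = (m : ℕ∞) ∧ ∃ Z, W Z ∧ CoresSeq W m M Z}

/-- The `W`-coresolution dimension of a class of objects: the supremum of the
coresolution dimensions of its members. -/
noncomputable def coresDimClass (W S : D → Prop) : ℕ∞ :=
  ⨆ (M : D) (_ : S M), coresDim W M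

/-- The essential image of a class of objects under a functor. -/
def imageClass {E : Type u₂} [Category.{v₂} E] (F : D ⥤ E) (S : D → Prop) : E → Prop :=
  fun Y => ∃ M, S M ∧ Nonempty (F.obj M ≅ Y)

lemma coresDim_le_of_coresSeq {W : D → Prop} {M Z : D} {k : ℕ} (hZ : W Z)
    (h : CoresSeq W k M Z) : coresDim W M ≤ k :=
  sInf_le ⟨k, rfl, Z, hZ, h⟩

lemma exists_coresSeq_of_coresDim_le {W : D → Prop} {M : D} {N : ℕ} (h : coresDim W M ≤ N) :
    ∃ k ≤ N, ∃ Z, W Z ∧ CoresSeq W k M Z := by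
  have hne : {n : ℕ∞ | ∃ k : ℕ, n = k ∧ ∃ Z, W Z ∧ CoresSeq W k M Z}.Nonempty :=
    Set.nonempty_iff_ne_empty.2 fun he => by simp [coresDim, he] at h
  obtain ⟨k, hk, hres⟩ := csInf_mem hne
  rw [coresDim, hk] at h
  exact ⟨k, by exact_mod_cast h, hres⟩

lemma coresDim_le_coresDimClass {W S : D → Prop} {M : D} (hM : S M) :
    coresDim W M ≤ coresDimClass W S :=
  le_iSup₂ (f := fun M (_ : S M) => coresDim W M) M hM

lemma CoresSeq.map {E : Type*} [Category E] [Abelian E] (F : D ⥤ E)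
    [F.PreservesZeroMorphisms] [PreservesFiniteLimits F] [PreservesFiniteColimits F]
    {W : D → Prop} {W' : E → Prop} (hW : ∀ T, W T → W' (F.obj T)) {n : ℕ} {M Z : D}
    (h : CoresSeq W n M Z) : CoresSeq W' n (F.obj M) (F.obj Z) := by
  induction n generalizing M with
  | zero => exact ⟨F.mapIso (Classical.choice h)⟩
  | succ n ih =>
    obtain ⟨W₀, K, f, g, hfg, hW₀, hS, hK⟩ := h
    exact ⟨F.obj W₀, F.obj K, F.map f, F.map g, by rw [← F.map_comp, hfg, F.map_zero],
      hW W₀ hW₀, hS.map_of_exact F, ih hK⟩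

section ExtVanishing

variable [HasExt.{w₁} D]

lemma subsingleton_ext_of_iso {A M M' : D} (e : M ≅ M') {k : ℕ}
    [Subsingleton (Abelian.Ext A M k)] : Subsingleton (Abelian.Ext A M' k) :=
  Function.Injective.subsingleton (f := fun z : Abelian.Ext A M' k =>
    z.comp (Abelian.Ext.mk₀ e.inv) (add_zero k))
    (Function.LeftInverse.injective (g := fun z => z.comp (Abelian.Ext.mk₀ e.hom) (add_zero k))
      fun z => by simp)

lemma perp_of_injective (X : D → Prop) (I : D) [Injective I] : perp X I := by
  intro A _ i hi
  obtain ⟨k, rfl⟩ : ∃ k, i = k + 1 := ⟨i - 1, by omega⟩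
  exact Abelian.Ext.subsingleton_of_injective A I k

def ExtVanishesAbove (X : D → Prop) (d : ℕ) (M : D) : Prop :=
  ∀ A, X A → ∀ k : ℕ, d < k → Subsingleton (Abelian.Ext A M k)

variable {X : D → Prop} {d : ℕ}

lemma perp_iff_extVanishesAbove_zero {M : D} : perp X M ↔ ExtVanishesAbove X 0 M := Iff.rfl

namespace ExtVanishesAbove

lemma mono {M : D} {d' : ℕ} (h : ExtVanishesAbove X d M) (hd : d ≤ d') :
    ExtVanishesAbove X d' M :=
  fun A hA k hk => h A hA k (by omega)

lemma of_iso {M M' : D} (h : ExtVanishesAbove X d M) (e : M ≅ M') : ExtVanishesAbove X d M' :=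
  fun A hA k hk => have := h A hA k hk; subsingleton_ext_of_iso e

lemma of_shortExact_X₁ {S : ShortComplex D} (hS : S.ShortExact)
    (h₂ : ExtVanishesAbove X d S.X₂) (h₃ : ExtVanishesAbove X d S.X₃) :
    ExtVanishesAbove X (d + 1) S.X₁ := by
  intro A hA k hk
  obtain ⟨k, rfl⟩ : ∃ k₀, k = k₀ + 1 := ⟨k - 1, by omega⟩
  have := h₃ A hA k (by omega)
  refine subsingleton_of_forall_eq 0 fun z => ?_
  obtain ⟨x₃, rfl⟩ := Abelian.Ext.covariant_sequence_exact₁ A hS z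
    ((h₂ A hA (k + 1) (by omega)).elim _ _) rfl
  rw [Subsingleton.elim x₃ 0, Abelian.Ext.zero_comp]

lemma of_shortExact_X₃ {S : ShortComplex D} (hS : S.ShortExact)
    (h₁ : ExtVanishesAbove X (d + 1) S.X₁) (h₂ : ExtVanishesAbove X d S.X₂) :
    ExtVanishesAbove X d S.X₃ := by
  intro A hA k hk
  have := h₂ A hA k hk
  refine subsingleton_of_forall_eq 0 fun z => ?_
  obtain ⟨x₂, rfl⟩ := Abelian.Ext.covariant_sequence_exact₃ A hS z rfl
    ((h₁ A hA (k + 1) (by omega)).elim _ _)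
  rw [Subsingleton.elim x₂ 0, Abelian.Ext.zero_comp]

end ExtVanishesAbove

lemma CoresSeq.extVanishesAbove {W : D → Prop} {n : ℕ} {M Z : D} (h : CoresSeq W n M Z)
    (hW : ∀ T, W T → ExtVanishesAbove X d T) (hZ : ExtVanishesAbove X d Z) :
    ExtVanishesAbove X (n + d) M := by
  induction n generalizing M with
  | zero => exact (hZ.of_iso (Classical.choice h).symm).mono (by omega)
  | succ n ih =>
    obtain ⟨W₀, K, f, g, hfg, hW₀, hS, hK⟩ := h
    exact (ExtVanishesAbove.of_shortExact_X₁ hS ((hW W₀ hW₀).mono (by omega)) (ih hK)).mono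
      (by omega)

lemma exists_coresSeq_perp_of_extVanishesAbove [EnoughInjectives D] {M : D}
    (h : ExtVanishesAbove X d M) : ∃ Z, perp X Z ∧ CoresSeq (perp X) d M Z := by
  induction d generalizing M with
  | zero => exact ⟨M, h, ⟨Iso.refl M⟩⟩
  | succ d ih =>
    let S := ShortComplex.mk (Injective.ι M) (cokernel.π (Injective.ι M)) (cokernel.condition _)
    have hS : S.ShortExact := .mk' (S.exact_of_g_is_cokernel (cokernelIsCokernel _))
      inferInstance inferInstance
    have hI : perp X S.X₂ := perp_of_injective X _
    have hQ : ExtVanishesAbove X d S.X₃ :=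
      .of_shortExact_X₃ hS h ((perp_iff_extVanishesAbove_zero.1 hI).mono (Nat.zero_le d))
    obtain ⟨Z, hZ, hres⟩ := ih hQ
    exact ⟨Z, hZ, S.X₂, S.X₃, S.f, S.g, S.zero, hI, hS, hres⟩

lemma ExtVanishesAbove.of_coresDim_perp_le {M : D} (h : coresDim (perp X) M ≤ d) :
    ExtVanishesAbove X d M := by
  obtain ⟨k, hk, Z, hZ, hres⟩ := exists_coresSeq_of_coresDim_le h
  exact (hres.extVanishesAbove (fun _ => perp_iff_extVanishesAbove_zero.1) hZ).mono (by omega)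

lemma coresDim_perp_le_of_extVanishesAbove [EnoughInjectives D] {M : D}
    (h : ExtVanishesAbove X d M) : coresDim (perp X) M ≤ d :=
  have ⟨_, hZ, hres⟩ := exists_coresSeq_perp_of_extVanishesAbove h
  coresDim_le_of_coresSeq hZ hres

end ExtVanishing

namespace Recollement

variable {𝒜 ℬ 𝒞 : Type*} [Category 𝒜] [Category ℬ] [Category 𝒞]
  [Preadditive 𝒜] [Abelian ℬ] [Abelian 𝒞] (R : Recollement 𝒜 ℬ 𝒞)

instance : R.jStar.PreservesZeroMorphisms :=
  have := R.jStar_additive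
  inferInstance

instance : PreservesFiniteLimits R.jStar :=
  have := R.adj₃.isRightAdjoint
  inferInstance

instance : PreservesFiniteColimits R.jStar :=
  have := R.adj₄.isLeftAdjoint
  inferInstance

instance : R.jIns.Full := R.jIns_full

instance : R.jIns.Faithful := R.jIns_faithful

theorem extVanishesAbove_of_coresDimClass_le [HasExt ℬ] [HasExt 𝒞] {X : ℬ → Prop}
    {X'' : 𝒞 → Prop} {n m : ℕ} (hn : coresDimClass (perp X) (fun _ : ℬ => True) ≤ n)
    (hm : coresDimClass (perp X'') (imageClass R.jStar (perp X)) ≤ m) (C : 𝒞) :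
    ExtVanishesAbove X'' (n + m) C := by
  have himage (W : ℬ) (hW : perp X W) : ExtVanishesAbove X'' m (R.jStar.obj W) :=
    .of_coresDim_perp_le ((coresDim_le_coresDimClass ⟨W, hW, ⟨Iso.refl _⟩⟩).trans hm)
  obtain ⟨k, hk, Z, hZ, hres⟩ := exists_coresSeq_of_coresDim_le
    ((coresDim_le_coresDimClass (M := R.jIns.obj C) trivial).trans hn)
  have hC := (hres.map R.jStar himage).extVanishesAbove (fun _ hT => hT) (himage Z hZ)
  exact (hC.mono (by omega)).of_iso (asIso (R.adj₄.counit.app C))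

end Recollement

variable {𝒜 : Type u₁} {ℬ : Type u₂} {𝒞 : Type u₃}
  [Category.{v₁} 𝒜] [Category.{v₂} ℬ] [Category.{v₃} 𝒞]
  [Abelian 𝒜] [Abelian ℬ] [Abelian 𝒞]
  [EnoughProjectives 𝒜] [EnoughInjectives 𝒜]
  [EnoughProjectives ℬ] [EnoughInjectives ℬ]
  [EnoughProjectives 𝒞] [EnoughInjectives 𝒞]
variable [HasExt.{w₁} 𝒜] [HasExt.{w₂} ℬ] [HasExt.{w₃} 𝒞]

theorem stmt_6_general (R : Recollement 𝒜 ℬ 𝒞)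
    (X : ℬ → Prop)
    (X'' : 𝒞 → Prop) :
    coresDimClass (perp X'') (fun _ : 𝒞 => True) ≤
      coresDimClass (perp X) (fun _ : ℬ => True) +
        coresDimClass (perp X'') (imageClass R.jStar (perp X)) := by
  refine iSup₂_le fun C _ => ?_
  rcases eq_or_ne (coresDimClass (perp X) fun _ : ℬ => True) ⊤ with hn | hn
  · simp [hn]
  rcases eq_or_ne (coresDimClass (perp X'') (imageClass R.jStar (perp X))) ⊤ with hm | hm
  · simp [hm]
  obtain ⟨n, hn⟩ := ENat.ne_top_iff_exists.1 hn
  obtain ⟨m, hm⟩ := ENat.ne_top_iff_exists.1 hm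
  rw [← hn, ← hm]
  exact_mod_cast coresDim_perp_le_of_extVanishesAbove
    (R.extVanishesAbove_of_coresDimClass_le hn.ge hm.ge C)

/-- Theorem 3.6(4) : a bound for the `X''^⊥`-coresolution dimension of `𝒞`. -/
theorem stmt_6 (R : Recollement 𝒜 ℬ 𝒞)
    (X : ℬ → Prop) (hX : ∀ A B : ℬ, (A ≅ B) → X A → X B)
    (X'' : 𝒞 → Prop) (hX'' : ∀ A B : 𝒞, (A ≅ B) → X'' A → X'' B) :
    coresDimClass (perp X'') (fun _ : 𝒞 => True) ≤
      coresDimClass (perp X) (fun _ : ℬ => True) +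
        coresDimClass (perp X'') (imageClass R.jStar (perp X)) :=
  stmt_6_general R X X''

end Paper
end

section
/- Let (A, B, C) be a recollement of abelian categories in which A, B, C have enough projectives and enough injectives. If the functor i^! is exact, then the global injective dimension of A is at most the global injective dimension of B. -/
open CategoryTheory CategoryTheory.Limits

universe w₁ w₂ w₃ v₁ v₂ v₃ u₁ u₂ u₃

namespace Paper

variable {D : Type u₁} [Category.{v₁} D] [Abelian D]

variable {𝒜 : Type u₁} {ℬ : Type u₂} {𝒞 : Type u₃}
  [Category.{v₁} 𝒜] [Category.{v₂} ℬ] [Category.{v₃} 𝒞]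
  [Abelian 𝒜] [Abelian ℬ] [Abelian 𝒞]
  [EnoughProjectives 𝒜] [EnoughInjectives 𝒜]
  [EnoughProjectives ℬ] [EnoughInjectives ℬ]
  [EnoughProjectives 𝒞] [EnoughInjectives 𝒞]

/-- The global injective dimension of an abelian category: the supremum over all
objects of the least length of an injective coresolution. -/
noncomputable def glInjDim (E : Type*) [Category E] [Abelian E] : ℕ∞ :=
  coresDimClass (fun M : E => Injective M) (fun _ => True)

/-- `CoresSeq` is invariant under isomorphism in the first object. -/
lemma coresSeq_of_iso {D₀ : Type*} [Category D₀] [Abelian D₀] {W : D₀ → Prop} :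
    ∀ (n : ℕ) {M M' Z : D₀}, (M ≅ M') → CoresSeq W n M Z → CoresSeq W n M' Z
  | 0, _, _, _, e, ⟨e'⟩ => ⟨e.symm.trans e'⟩
  | n + 1, M, M', Z, e, ⟨W₀, K, f, g, hfg, hW, hse, hrest⟩ =>
    ⟨W₀, K, e.inv ≫ f, g, by rw [Category.assoc, hfg, comp_zero], hW,
      ShortComplex.shortExact_of_iso
        (ShortComplex.isoMk (S₁ := ShortComplex.mk f g hfg) e (Iso.refl _) (Iso.refl _)
          (by simp) (by simp)) hse, hrest⟩

/-- An exact functor sending `W` into `W'` maps coresolutions to coresolutions. -/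
lemma coresSeq_map {D₀ : Type*} {E₀ : Type*} [Category D₀] [Category E₀]
    [Abelian D₀] [Abelian E₀] {W : D₀ → Prop} {W' : E₀ → Prop} (F : D₀ ⥤ E₀)
    [F.PreservesZeroMorphisms] [PreservesFiniteLimits F] [PreservesFiniteColimits F]
    (hW : ∀ X, W X → W' (F.obj X)) :
    ∀ (n : ℕ) {M Z : D₀}, CoresSeq W n M Z → CoresSeq W' n (F.obj M) (F.obj Z)
  | 0, _, _, ⟨e⟩ => ⟨F.mapIso e⟩
  | n + 1, M, Z, ⟨W₀, K, f, g, hfg, hW₀, hse, hrest⟩ =>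
    ⟨F.obj W₀, F.obj K, F.map f, F.map g,
      by rw [← F.map_comp, hfg, F.map_zero], hW W₀ hW₀,
      hse.map_of_exact F, coresSeq_map F hW n hrest⟩

/-- Corollary 3.7(7) : if `i^!` is exact, then `gl.injdim 𝒜 ≤ gl.injdim ℬ`. -/
theorem stmt_9 (R : Recollement 𝒜 ℬ 𝒞)
    [PreservesFiniteLimits R.iShriek] [PreservesFiniteColimits R.iShriek] :
    glInjDim 𝒜 ≤ glInjDim ℬ := by
  letI := R.iIns_full
  letI := R.iIns_faithful
  letI := R.iIns_additive
  letI := R.iShriek_additive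
  letI : PreservesLimits R.iIns := R.adj₁.rightAdjoint_preservesLimits
  letI : R.iIns.PreservesMonomorphisms := inferInstance
  have hinj : ∀ (I : ℬ), Injective I → Injective (R.iShriek.obj I) :=
    fun I hI => R.adj₂.map_injective I hI
  rw [glInjDim, glInjDim, coresDimClass, coresDimClass]
  refine iSup_le fun M => iSup_le fun _ => ?_
  have key : coresDim (fun X : 𝒜 => Injective X) M ≤
      coresDim (fun X : ℬ => Injective X) (R.iIns.obj M) := by
    apply sInf_le_sInf
    rintro n ⟨m, rfl, Z, hZ, hcs⟩
    refine ⟨m, rfl, R.iShriek.obj Z, hinj Z hZ, ?_⟩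
    exact coresSeq_of_iso m (asIso (R.adj₂.unit.app M)).symm
      (coresSeq_map R.iShriek hinj m hcs)
  exact key.trans (le_iSup_of_le (R.iIns.obj M) (le_iSup_of_le trivial le_rfl))

end Paper
end
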